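/- Let λ, u, X, Y ∈ ℂ with λ ≠ 0, u ≠ 0, and assume E := 16u³λ² − 3iYλ² + 12Xuλ² + 4u⁴ + 4u² ≠ 0 and F := 4u²λ² + 3Xλ² + u³ − 2u ≠ 0 (where i² = −1). Define x₁ = −(4u²λ² + 3Xλ² + u³ + u)(4u²λ² + 3Xλ² + u³ − 2u)/(6λ²uE), x₂ = −E/(8uF), x₃ = u²F/(2λ²E), and t = 1/λ⁴. Then x₁x₂x₃(x₁ + x₂ + x₃ + 1) + t/256 = 0 holds if and only if Y² = 4X³ − g₂(u)X − g₃(u), where g₂(u) = (4/(3λ⁴))·u²·(u⁴ + 8λ²u³ + (4λ²−1)(4λ²+1)u² + 8λ²u + 1) and g₃(u) = (4/(27λ⁶))·u³·(u² + 4λ²u + 1)(2u⁴ + 16λ²u³ + (32λ⁴−5)u² + 16λ²u + 2). (This is the Narumiya–Shiga birational equivalence between the mirror quartic K3 family and a Jacobian elliptic Weierstrass model.) -/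
import Mathlib


open Complex

/-- The Narumiya–Shiga birational equivalence between the mirror quartic K3 family
`x₁x₂x₃(x₁+x₂+x₃+1) + t/256 = 0` (with `t = 1/λ⁴`) and the Jacobian elliptic
Weierstrass model `Y² = 4X³ - g₂(u)X - g₃(u)`. -/
theorem mirror_quartic_iff_weierstrass
    (lam u X Y : ℂ) (hlam : lam ≠ 0) (hu : u ≠ 0)
    (hE : 16*u^3*lam^2 - 3*I*Y*lam^2 + 12*X*u*lam^2 + 4*u^4 + 4*u^2 ≠ 0)
    (hF : 4*u^2*lam^2 + 3*X*lam^2 + u^3 - 2*u ≠ 0)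
    (x₁ x₂ x₃ t : ℂ)
    (hx₁ : x₁ = -((4*u^2*lam^2 + 3*X*lam^2 + u^3 + u) * (4*u^2*lam^2 + 3*X*lam^2 + u^3 - 2*u)) /
      (6*lam^2*u*(16*u^3*lam^2 - 3*I*Y*lam^2 + 12*X*u*lam^2 + 4*u^4 + 4*u^2)))
    (hx₂ : x₂ = -(16*u^3*lam^2 - 3*I*Y*lam^2 + 12*X*u*lam^2 + 4*u^4 + 4*u^2) /
      (8*u*(4*u^2*lam^2 + 3*X*lam^2 + u^3 - 2*u)))
    (hx₃ : x₃ = u^2*(4*u^2*lam^2 + 3*X*lam^2 + u^3 - 2*u) /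
      (2*lam^2*(16*u^3*lam^2 - 3*I*Y*lam^2 + 12*X*u*lam^2 + 4*u^4 + 4*u^2)))
    (ht : t = 1 / lam^4) :
    x₁*x₂*x₃*(x₁ + x₂ + x₃ + 1) + t/256 = 0 ↔
      Y^2 = 4*X^3
        - (4/(3*lam^4) * u^2 *
            (u^4 + 8*lam^2*u^3 + (4*lam^2 - 1)*(4*lam^2 + 1)*u^2 + 8*lam^2*u + 1)) * X
        - (4/(27*lam^6) * u^3 * (u^2 + 4*lam^2*u + 1) *
            (2*u^4 + 16*lam^2*u^3 + (32*lam^4 - 5)*u^2 + 16*lam^2*u + 2)) := by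
  subst hx₁ hx₂ hx₃ ht
  have hI : I^2 = -1 := I_sq
  set E := 16*u^3*lam^2 - 3*I*Y*lam^2 + 12*X*u*lam^2 + 4*u^4 + 4*u^2 with hEdef
  set F := 4*u^2*lam^2 + 3*X*lam^2 + u^3 - 2*u with hFdef
  set G := 4*u^2*lam^2 + 3*X*lam^2 + u^3 + u with hGdef
  set W := 4*X^3
        - (4/(3*lam^4) * u^2 *
            (u^4 + 8*lam^2*u^3 + (4*lam^2 - 1)*(4*lam^2 + 1)*u^2 + 8*lam^2*u + 1)) * X
        - (4/(27*lam^6) * u^3 * (u^2 + 4*lam^2*u + 1) *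
            (2*u^4 + 16*lam^2*u^3 + (32*lam^4 - 5)*u^2 + 16*lam^2*u + 2)) with hWdef
  clear_value E F G W
  have h6 : (6*lam^2*u*E : ℂ) ≠ 0 := by
    refine mul_ne_zero (mul_ne_zero (mul_ne_zero ?_ (pow_ne_zero _ hlam)) hu) hE
    norm_num
  have h8 : (8*u*F : ℂ) ≠ 0 := mul_ne_zero (mul_ne_zero (by norm_num) hu) hF
  have h2 : (2*lam^2*E : ℂ) ≠ 0 :=
    mul_ne_zero (mul_ne_zero (by norm_num) (pow_ne_zero _ hlam)) hE
  have h96 : (96*lam^4*E : ℂ) ≠ 0 :=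
    mul_ne_zero (mul_ne_zero (by norm_num) (pow_ne_zero _ hlam)) hE
  have h24 : (24*lam^2*u*E*F : ℂ) ≠ 0 := by
    refine mul_ne_zero (mul_ne_zero (mul_ne_zero (mul_ne_zero ?_ (pow_ne_zero _ hlam)) hu) hE) hF
    norm_num
  have hden : (2304*lam^6*u*E^2 : ℂ) ≠ 0 := by
    refine mul_ne_zero (mul_ne_zero (mul_ne_zero ?_ (pow_ne_zero _ hlam)) hu)
      (pow_ne_zero _ hE)
    norm_num
  have hprod : (-(G*F) / (6*lam^2*u*E)) * (-E / (8*u*F)) * (u^2*F / (2*lam^2*E))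
      = G*F / (96*lam^4*E) := by
    rw [div_mul_div_comm, div_mul_div_comm,
      div_eq_div_iff (mul_ne_zero (mul_ne_zero h6 h8) h2) h96]
    ring
  have hsum : (-(G*F) / (6*lam^2*u*E)) + (-E / (8*u*F)) + (u^2*F / (2*lam^2*E)) + 1
      = (-4*G*F^2 - 3*lam^2*E^2 + 12*u^3*F^2 + 24*lam^2*u*E*F)/(24*lam^2*u*E*F) := by
    rw [div_add_div _ _ h6 h8, div_add_div _ _ (mul_ne_zero h6 h8) h2,
      div_add_one (mul_ne_zero (mul_ne_zero h6 h8) h2),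
      div_eq_div_iff (mul_ne_zero (mul_ne_zero h6 h8) h2) h24]
    ring
  have hkey : (-(G * F) / (6*lam^2*u*E)) * (-E / (8*u*F)) * (u^2*F / (2*lam^2*E)) *
      ((-(G * F) / (6*lam^2*u*E)) + (-E / (8*u*F)) + (u^2*F / (2*lam^2*E)) + 1) +
      (1 / lam^4)/256
      = (G*(-4*G*F^2 - 3*lam^2*E^2 + 12*u^3*F^2 + 24*lam^2*u*E*F) + 9*lam^2*u*E^2) /
        (2304*lam^6*u*E^2) := by
    have h256 : (256*lam^4 : ℂ) ≠ 0 := mul_ne_zero (by norm_num) (pow_ne_zero _ hlam)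
    rw [hprod, hsum, div_mul_div_comm, one_div,
      show ((lam^4)⁻¹/256 : ℂ) = 1/(256*lam^4) by rw [inv_eq_one_div, div_div]; ring_nf,
      div_add_div _ _ (mul_ne_zero h96 h24) h256,
      div_eq_div_iff (mul_ne_zero (mul_ne_zero h96 h24) h256) hden]
    ring
  -- the numerator factors through the Weierstrass relation
  have hWP : lam^6 * W = 4*lam^6*X^3
      - (4/3)*lam^2*u^2*(u^4 + 8*lam^2*u^3 + (4*lam^2 - 1)*(4*lam^2 + 1)*u^2 + 8*lam^2*u + 1)*X
      - (4/27)*u^3*(u^2 + 4*lam^2*u + 1)*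
          (2*u^4 + 16*lam^2*u^3 + (32*lam^4 - 5)*u^2 + 16*lam^2*u + 2) := by
    rw [hWdef]
    field_simp
  have hN : G*(-4*G*F^2 - 3*lam^2*E^2 + 12*u^3*F^2 + 24*lam^2*u*E*F) + 9*lam^2*u*E^2
      = 27*F*(lam^6*Y^2 - lam^6*W) := by
    rw [hWP, hEdef, hFdef, hGdef]
    linear_combination (-27*lam^6*Y^2*(4*u^2*lam^2 + 3*X*lam^2 + u^3 - 2*u)) * hI
  rw [hkey, hN, div_eq_zero_iff]
  have h27F : (27*F : ℂ) ≠ 0 := mul_ne_zero (by norm_num) hF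
  rw [or_iff_left hden, show 27*F*(lam^6*Y^2 - lam^6*W) = (27*F*lam^6)*(Y^2 - W) by ring,
    mul_eq_zero, or_iff_right (mul_ne_zero h27F (pow_ne_zero _ hlam)), sub_eq_zero]
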